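/- arXiv:2509.06182 — 8 statements merged into one kernel-verified Lean document; each statement's English description precedes it below -/
import Mathlib

section
/- In any orientation of an undirected graph, if the orientation contains a directed cycle, then its indegree vector is not an extreme point of the convex hull of all indegree vectors of orientations of the graph; conversely, the indegree vector of every acyclic orientation is an extreme point. Hence the vertices (corners) of the indegree polytope are exactly the indegree vectors of acyclic orientations. -/
open Finset

/-- A finite loop-free multigraph: edges indexed by `E`, each with two distinct endpoints. -/
structure Multigraph (V E : Type) where
  fst : E → V
  snd : E → V
  loopless : ∀ e, fst e ≠ snd e

namespace Multigraph

variable {V E : Type} [Fintype V] [DecidableEq V] [Fintype E] [DecidableEq E]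

/-- Head of edge `e` under orientation `o`. -/
def head (G : Multigraph V E) (o : E → Bool) (e : E) : V :=
  if o e then G.fst e else G.snd e

/-- Tail of edge `e` under orientation `o`. -/
def tail (G : Multigraph V E) (o : E → Bool) (e : E) : V :=
  if o e then G.snd e else G.fst e

/-- Indegree of `v` under orientation `o`. -/
def indeg (G : Multigraph V E) (o : E → Bool) (v : V) : ℕ :=
  (Finset.univ.filter (fun e => G.head o e = v)).card

/-- The orientation `o` contains a directed cycle (a closed directed trail). -/
def HasDicycle (G : Multigraph V E) (o : E → Bool) : Prop :=
  ∃ k : ℕ, ∃ hk : 0 < k, ∃ f : Fin k → E, Function.Injective f ∧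
    ∀ i : Fin k, G.head o (f i) = G.tail o (f ⟨(i.val + 1) % k, Nat.mod_lt _ hk⟩)

/-- The orientation `o` is acyclic. -/
def Acyclic (G : Multigraph V E) (o : E → Bool) : Prop := ¬ G.HasDicycle o

/-- Left-degree of `v` in the vertex ordering `σ`. -/
def leftDeg (G : Multigraph V E) (σ : V ≃ Fin (Fintype.card V)) (v : V) : ℕ :=
  (Finset.univ.filter (fun e =>
    (G.fst e = v ∧ σ (G.snd e) < σ v) ∨ (G.snd e = v ∧ σ (G.fst e) < σ v))).card

/-- Right-degree of `v` in the vertex ordering `σ`. -/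
def rightDeg (G : Multigraph V E) (σ : V ≃ Fin (Fintype.card V)) (v : V) : ℕ :=
  (Finset.univ.filter (fun e =>
    (G.fst e = v ∧ σ v < σ (G.snd e)) ∨ (G.snd e = v ∧ σ v < σ (G.fst e)))).card

/-- Degree of `v` in the subgraph induced by `S`. -/
def degIn (G : Multigraph V E) (S : Finset V) (v : V) : ℕ :=
  (Finset.univ.filter (fun e =>
    (G.fst e = v ∨ G.snd e = v) ∧ G.fst e ∈ S ∧ G.snd e ∈ S)).card

/-- Degree of `v` in `G`. -/
def deg (G : Multigraph V E) (v : V) : ℕ :=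
  (Finset.univ.filter (fun e => G.fst e = v ∨ G.snd e = v)).card

/-- The set of vertices appearing at or before `v` in the ordering `σ`. -/
def prefixSet (σ : V ≃ Fin (Fintype.card V)) (v : V) : Finset V :=
  Finset.univ.filter (fun u => σ u ≤ σ v)

end Multigraph

/-!
A directed cycle `C` is balanced: each vertex is the head of as many edges of `C` as it is the
tail of. Reversing one edge `e` of `C`, or the other edges of `C`, gives two orientations whose
indegree vectors average to the original one, and the first differs from it at the head of `e`;
so the original vector is not extreme.

For an acyclic orientation, weight each vertex by its number of ancestors. The head of every edge
then outweighs its tail, so the linear functional with these weights is maximized among all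
orientations exactly by those with the given indegree vector, which is therefore extreme.
-/

section Convex

variable {F : Type*} [AddCommGroup F] [Module ℝ F]

lemma LinearMap.map_combo_lt (l : F →ₗ[ℝ] ℝ) {x y z : F} {a b : ℝ} (ha : 0 < a) (hb : 0 ≤ b)
    (hab : a + b = 1) (hy : l y < l x) (hz : l z ≤ l x) : l (a • y + b • z) < l x := by
  have hsplit : l x = a * l x + b * l x := by rw [← add_mul, hab, one_mul]
  rw [map_add, map_smul, map_smul, smul_eq_mul, smul_eq_mul]
  linarith [mul_lt_mul_of_pos_left hy ha, mul_le_mul_of_nonneg_left hz hb]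

lemma convex_insert_setOf_lt (l : F →ₗ[ℝ] ℝ) (x : F) : Convex ℝ (insert x {y | l y < l x}) := by
  refine convex_iff_forall_pos.2 fun y hy z hz a b ha hb hab => ?_
  rcases hy with rfl | hy
  · rcases hz with rfl | hz
    · exact .inl (Convex.combo_self hab _)
    · rw [add_comm] at hab ⊢
      exact .inr (l.map_combo_lt hb ha.le hab hz le_rfl)
  · have hz : l z ≤ l x := by rcases hz with rfl | hz; exacts [le_rfl, hz.le]
    exact .inr (l.map_combo_lt ha hb.le hab hy hz)

lemma mem_extremePoints_insert_setOf_lt (l : F →ₗ[ℝ] ℝ) (x : F) :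
    x ∈ (insert x {y | l y < l x}).extremePoints ℝ := by
  refine ⟨Set.mem_insert x _, fun y hy z hz ⟨a, b, ha, hb, hab, hxyz⟩ => ?_⟩
  by_contra hyx
  have hz : l z ≤ l x := by rcases hz with rfl | hz; exacts [le_rfl, hz.le]
  have := l.map_combo_lt ha hb.le hab (hy.resolve_left hyx) hz
  rw [hxyz] at this
  exact lt_irrefl _ this

theorem mem_extremePoints_convexHull_of_forall_lt {S : Set F} {x : F} (l : F →ₗ[ℝ] ℝ)
    (hx : x ∈ S) (hlt : ∀ y ∈ S, y ≠ x → l y < l x) : x ∈ (convexHull ℝ S).extremePoints ℝ := by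
  have hsub : convexHull ℝ S ⊆ insert x {y | l y < l x} :=
    convexHull_min (fun y hy => (eq_or_ne y x).imp id (hlt y hy)) (convex_insert_setOf_lt l x)
  exact inter_extremePoints_subset_extremePoints_of_subset hsub
    ⟨subset_convexHull ℝ S hx, mem_extremePoints_insert_setOf_lt l x⟩

lemma eq_of_mem_extremePoints_of_add_eq {A : Set F} {x y z : F} (hx : x ∈ A.extremePoints ℝ)
    (hy : y ∈ A) (hz : z ∈ A) (h : y + z = (2 : ℝ) • x) : y = x := by
  refine hx.2 hy hz ⟨1 / 2, 1 / 2, by norm_num, by norm_num, by norm_num, ?_⟩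
  rw [← smul_add, h, smul_smul]
  norm_num

end Convex

lemma val_finRotate {k : ℕ} (i : Fin k) : (finRotate k i : ℕ) = (i + 1) % k := by
  have := i.neZero
  simp [Fin.val_add]

namespace Multigraph

variable {V E : Type}

section Reverse

variable (G : Multigraph V E)

lemma head_ne_tail (o : E → Bool) (e : E) : G.head o e ≠ G.tail o e := by
  unfold head tail
  cases o e
  exacts [(G.loopless e).symm, G.loopless e]

lemma head_eq_or_eq_tail (o o' : E → Bool) (e : E) :
    G.head o' e = G.head o e ∨ G.head o' e = G.tail o e := by
  unfold head tail
  cases o e <;> cases o' e <;> simp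

variable [DecidableEq E]

def reverse (T : Finset E) (o : E → Bool) : E → Bool := fun e => if e ∈ T then !o e else o e

lemma head_reverse_of_mem {T : Finset E} {o : E → Bool} {e : E} (he : e ∈ T) :
    G.head (reverse T o) e = G.tail o e := by
  unfold head tail reverse
  cases o e <;> simp [he]

lemma head_reverse_of_notMem {T : Finset E} {o : E → Bool} {e : E} (he : e ∉ T) :
    G.head (reverse T o) e = G.head o e := by
  unfold head reverse
  simp [he]

variable [DecidableEq V]

def IsBalanced (o : E → Bool) (T : Finset E) : Prop :=
  ∀ v, #{e ∈ T | G.head o e = v} = #{e ∈ T | G.tail o e = v}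

variable [Fintype E]

lemma indeg_reverse_add (T : Finset E) (o : E → Bool) (v : V) :
    G.indeg (reverse T o) v + #{e ∈ T | G.head o e = v} =
      G.indeg o v + #{e ∈ T | G.tail o e = v} := by
  have split : ∀ o', G.indeg o' v =
      #{e ∈ T | G.head o' e = v} + #{e ∈ Tᶜ | G.head o' e = v} := fun o' => by
    simp only [indeg, card_filter]
    exact (sum_add_sum_compl T _).symm
  have hT : #{e ∈ T | G.head (reverse T o) e = v} = #{e ∈ T | G.tail o e = v} :=
    congrArg card (filter_congr fun e he => by rw [G.head_reverse_of_mem he])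
  have hTc : #{e ∈ Tᶜ | G.head (reverse T o) e = v} = #{e ∈ Tᶜ | G.head o e = v} :=
    congrArg card (filter_congr fun e he => by rw [G.head_reverse_of_notMem (mem_compl.1 he)])
  rw [split, split o, hT, hTc]
  ring

lemma indeg_reverse_add_indeg_reverse_sdiff {o : E → Bool} {A T : Finset E}
    (hT : G.IsBalanced o T) (hA : A ⊆ T) (v : V) :
    G.indeg (reverse A o) v + G.indeg (reverse (T \ A) o) v = 2 * G.indeg o v := by
  have hcard : ∀ p : E → Prop, [DecidablePred p] →
      #{e ∈ T | p e} = #{e ∈ A | p e} + #{e ∈ T \ A | p e} := fun p _ => by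
    simp only [card_filter]
    rw [← sum_sdiff hA, add_comm]
  have h₁ := G.indeg_reverse_add A o v
  have h₂ := G.indeg_reverse_add (T \ A) o v
  have h := hT v
  rw [hcard, hcard] at h
  omega

lemma indeg_reverse_singleton_ne (o : E → Bool) (e : E) :
    G.indeg (reverse {e} o) ≠ G.indeg o := by
  intro h
  have := G.indeg_reverse_add {e} o (G.head o e)
  simp [h, filter_singleton, (G.head_ne_tail o e).symm] at this

end Reverse

section Walks

variable (G : Multigraph V E) (o : E → Bool)

def Adj (u v : V) : Prop := ∃ e, G.tail o e = u ∧ G.head o e = v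

/-- `w 0, …, w (n - 1)` is a directed walk; the values of `w` from `n` on play no role. -/
def IsWalk (n : ℕ) (w : ℕ → E) : Prop := ∀ i, i + 1 < n → G.head o (w i) = G.tail o (w (i + 1))

lemma exists_isWalk_of_transGen {u v : V} (h : Relation.TransGen (G.Adj o) u v) :
    ∃ n w, 0 < n ∧ G.IsWalk o n w ∧ G.tail o (w 0) = u ∧ G.head o (w (n - 1)) = v := by
  induction h with
  | single huv =>
    obtain ⟨e, rfl, rfl⟩ := huv
    exact ⟨1, fun _ => e, one_pos, fun i hi => by omega, rfl, rfl⟩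
  | tail _ hvx ih =>
    obtain ⟨n, w, hn, hw, rfl, rfl⟩ := ih
    obtain ⟨e, he, rfl⟩ := hvx
    refine ⟨n + 1, fun i => if i < n then w i else e, n.succ_pos, fun i hi => ?_, ?_, ?_⟩
    · rcases Nat.lt_or_ge (i + 1) n with h | h
      · simp only [if_pos h, if_pos (Nat.lt_of_succ_lt h), hw i h]
      · obtain rfl : i = n - 1 := by omega
        simp only [if_pos (Nat.sub_lt hn one_pos), if_neg (lt_irrefl _), Nat.sub_add_cancel hn, he]
    · simp only [if_pos hn]
    · simp only [Nat.add_sub_cancel, if_neg (lt_irrefl n)]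

lemma hasDicycle_of_isWalk_of_injOn {n : ℕ} {w : ℕ → E} (hn : 0 < n) (hw : G.IsWalk o n w)
    (hclosed : G.head o (w (n - 1)) = G.tail o (w 0)) (hinj : Set.InjOn w (Set.Iio n)) :
    G.HasDicycle o := by
  refine ⟨n, hn, fun i => w i, fun i j h => Fin.ext (hinj i.2 j.2 h), fun i => ?_⟩
  show G.head o (w i) = G.tail o (w ((i + 1) % n))
  rcases Nat.lt_or_ge (i + 1) n with h | h
  · rw [Nat.mod_eq_of_lt h, hw i h]
  · rw [show (i : ℕ) + 1 = n by omega, Nat.mod_self, show (i : ℕ) = n - 1 by omega, hclosed]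

/-- A repeated edge `w i = w j` with `i < j` cuts out the shorter closed walk
`w i, …, w (j - 1)`. -/
lemma hasDicycle_of_isWalk {n : ℕ} {w : ℕ → E} (hn : 0 < n) (hw : G.IsWalk o n w)
    (hclosed : G.head o (w (n - 1)) = G.tail o (w 0)) : G.HasDicycle o := by
  induction n using Nat.strong_induction_on generalizing w with
  | _ n ih =>
    by_cases hinj : Set.InjOn w (Set.Iio n)
    · exact G.hasDicycle_of_isWalk_of_injOn o hn hw hclosed hinj
    obtain ⟨i, hi, j, hj, hij, hne⟩ : ∃ i < n, ∃ j < n, w i = w j ∧ i < j := by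
      simp only [Set.InjOn, Set.mem_Iio, not_forall] at hinj
      obtain ⟨i, hi, j, hj, hij, hne⟩ := hinj
      rcases Nat.lt_or_gt_of_ne hne with h | h
      exacts [⟨i, hi, j, hj, hij, h⟩, ⟨j, hj, i, hi, hij.symm, h⟩]
    refine ih (j - i) (by omega) (w := fun p => w (i + p)) (by omega) (fun p hp => ?_) ?_
    · simpa only [add_assoc] using hw (i + p) (by omega)
    · have hlast := hw (i + (j - i - 1)) (by omega)
      rw [show i + (j - i - 1) + 1 = j by omega, ← hij] at hlast
      simpa only [add_zero] using hlast

end Walks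

variable {G : Multigraph V E} {o : E → Bool}

lemma HasDicycle.exists_isBalanced [DecidableEq E] [DecidableEq V] (h : G.HasDicycle o) :
    ∃ T : Finset E, T.Nonempty ∧ G.IsBalanced o T := by
  obtain ⟨k, hk, f, hf, hcyc⟩ := h
  refine ⟨univ.image f, (univ_nonempty_iff.2 ⟨⟨0, hk⟩⟩).image f, fun v => ?_⟩
  have hnext : ∀ i, G.head o (f i) = G.tail o (f (finRotate k i)) := fun i => by
    rw [hcyc i]
    congr
    exact (val_finRotate i).symm
  simp only [filter_image, card_image_of_injective _ hf, card_filter]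
  exact Fintype.sum_equiv (finRotate k) _ _ fun i => by rw [hnext]

lemma Acyclic.irrefl_transGen (h : G.Acyclic o) (v : V) : ¬ Relation.TransGen (G.Adj o) v v := by
  intro hv
  obtain ⟨n, w, hn, hw, h₀, h₁⟩ := G.exists_isWalk_of_transGen o hv
  exact h (G.hasDicycle_of_isWalk o hn hw (h₁.trans h₀.symm))

open Classical in
noncomputable def ancestors [Fintype V] (G : Multigraph V E) (o : E → Bool) (v : V) : Finset V :=
  {u | Relation.TransGen (G.Adj o) u v}

lemma Acyclic.card_ancestors_tail_lt [Fintype V] (h : G.Acyclic o) (e : E) :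
    #(G.ancestors o (G.tail o e)) < #(G.ancestors o (G.head o e)) := by
  have hadj : G.Adj o (G.tail o e) (G.head o e) := ⟨e, rfl, rfl⟩
  refine card_lt_card (ssubset_iff_of_subset (fun u hu => ?_) |>.2 ⟨G.tail o e, ?_, ?_⟩)
  · simp only [ancestors, mem_filter, mem_univ, true_and] at hu ⊢
    exact hu.tail hadj
  · simpa [ancestors] using Relation.TransGen.single hadj
  · simpa [ancestors] using h.irrefl_transGen _

section Polytope

variable [DecidableEq V] [Fintype E] (G)

def indegPolytope : Set (V → ℝ) :=
  convexHull ℝ {y | ∃ o : E → Bool, y = fun v => (G.indeg o v : ℝ)}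

lemma indeg_mem_indegPolytope (o : E → Bool) : (fun v => (G.indeg o v : ℝ)) ∈ G.indegPolytope :=
  subset_convexHull ℝ _ ⟨o, rfl⟩

lemma sum_mul_indeg [Fintype V] {R : Type*} [CommSemiring R] (c : V → R) (o : E → Bool) :
    ∑ v, c v * G.indeg o v = ∑ e, c (G.head o e) := by
  rw [← sum_fiberwise univ (G.head o)]
  refine sum_congr rfl fun v _ => ?_
  rw [sum_congr rfl fun e he => congrArg c (mem_filter.1 he).2, sum_const, nsmul_eq_mul, mul_comm]
  rfl

theorem indeg_mem_extremePoints_of_acyclic [Fintype V] (h : G.Acyclic o) :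
    (fun v => (G.indeg o v : ℝ)) ∈ G.indegPolytope.extremePoints ℝ := by
  let c : V → ℝ := fun v => #(G.ancestors o v)
  let l : (V → ℝ) →ₗ[ℝ] ℝ := ∑ v, c v • LinearMap.proj v
  have hl : ∀ o', l (fun v => (G.indeg o' v : ℝ)) = ∑ e, c (G.head o' e) := fun o' => by
    rw [← G.sum_mul_indeg]
    simp [l]
  have hlt : ∀ e, c (G.tail o e) < c (G.head o e) := fun e =>
    Nat.cast_lt.2 (h.card_ancestors_tail_lt e)
  have hle : ∀ o' e, c (G.head o' e) ≤ c (G.head o e) := fun o' e => by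
    rcases G.head_eq_or_eq_tail o o' e with he | he <;> rw [he]
    exact (hlt e).le
  refine mem_extremePoints_convexHull_of_forall_lt l ⟨o, rfl⟩ ?_
  rintro _ ⟨o', rfl⟩ hne
  obtain ⟨e, he⟩ : ∃ e, G.head o' e ≠ G.head o e := by
    by_contra! hall
    exact hne (by simp [indeg, hall])
  rw [hl, hl]
  refine sum_lt_sum (fun e _ => hle o' e) ⟨e, mem_univ e, ?_⟩
  rw [(G.head_eq_or_eq_tail o o' e).resolve_left he]
  exact hlt e

theorem indeg_notMem_extremePoints_of_hasDicycle [DecidableEq E] (h : G.HasDicycle o) :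
    (fun v => (G.indeg o v : ℝ)) ∉ G.indegPolytope.extremePoints ℝ := by
  intro hx
  obtain ⟨T, ⟨e, he⟩, hT⟩ := h.exists_isBalanced
  refine G.indeg_reverse_singleton_ne o e (funext fun v => ?_)
  have hmid := eq_of_mem_extremePoints_of_add_eq hx (G.indeg_mem_indegPolytope (reverse {e} o))
    (G.indeg_mem_indegPolytope (reverse (T \ {e}) o)) (funext fun v => ?_)
  · exact_mod_cast congrFun hmid v
  · simp only [Pi.add_apply, Pi.smul_apply, smul_eq_mul]
    exact_mod_cast G.indeg_reverse_add_indeg_reverse_sdiff hT (singleton_subset_iff.2 he) v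

end Polytope

end Multigraph

open Multigraph

variable {V E : Type} [Fintype V] [DecidableEq V] [Fintype E] [DecidableEq E]

/-- The extreme points of the indegree polytope are exactly the indegree
vectors of acyclic orientations. -/
theorem corners_of_indegree_polytope (G : Multigraph V E) (x : V → ℝ) :
    x ∈ Set.extremePoints ℝ
        (convexHull ℝ {y : V → ℝ | ∃ o : E → Bool, y = fun v => (G.indeg o v : ℝ)}) ↔
      ∃ o : E → Bool, G.Acyclic o ∧ x = fun v => (G.indeg o v : ℝ) := by
  change x ∈ G.indegPolytope.extremePoints ℝ ↔ _
  constructor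
  · intro hx
    obtain ⟨o, rfl⟩ := extremePoints_convexHull_subset hx
    exact ⟨o, fun h => G.indeg_notMem_extremePoints_of_hasDicycle h hx, rfl⟩
  · rintro ⟨o, h, rfl⟩
    exact G.indeg_mem_extremePoints_of_acyclic h
end

section
/- For every graph G that is not a forest, no extreme point of the indegree polytope P_ρ(G) minimizes ∑_{v∈V} φ(ρ(v)) over integer points of P_ρ(G) for a strictly convex function φ; equivalently, if G contains a cycle, then for any acyclic orientation there exists a (possibly cyclic) orientation with strictly smaller value of ∑_{v∈V} φ(ρ(v)) for every discrete strictly convex φ. -/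
open Finset

/-!
If `o` is acyclic, its restriction to a cycle of `G` cannot have all indegrees at most one: the
cycle spans no more vertices than edges, so the heads would cover its vertex set and following
in-arcs backwards would close a directed cycle. Hence some `t` has `ρ(t) ≥ 2`. If `o` were optimal,
reversing a directed trail from `u` to `t` (which moves one unit of indegree from `t` to `u`)
must not help, so by strict convexity every `u` that reaches `t` has `ρ(u) ≥ 1`; following in-arcs
backwards inside this set again closes a directed cycle.
-/

open Multigraph

theorem Function.exists_mem_periodicPts {α : Type*} [Finite α] [Nonempty α] (f : α → α) :
    ∃ x, x ∈ Function.periodicPts f := by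
  obtain ⟨m, n, hmn, heq⟩ := Finite.exists_ne_map_eq_of_infinite (f^[·] (Classical.arbitrary α))
  wlog hlt : m < n generalizing m n
  · exact this n m hmn.symm heq.symm (by omega)
  refine ⟨f^[m] (Classical.arbitrary α), Function.mk_mem_periodicPts (n := n - m) (by omega) ?_⟩
  simp only [Function.IsPeriodicPt, Function.IsFixedPt, ← Function.iterate_add_apply,
    Nat.sub_add_cancel hlt.le]
  exact heq.symm

theorem apply_add_one_add_apply_sub_one_lt {φ : ℕ → ℝ}
    (hφ : ∀ z : ℕ, 1 ≤ z → 2 * φ z < φ (z + 1) + φ (z - 1)) {a b : ℕ} (hab : a + 2 ≤ b) :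
    φ (a + 1) + φ (b - 1) < φ a + φ b := by
  have hmono : StrictMono fun z => φ (z + 1) - φ z := strictMono_nat_of_lt_succ fun n => by
    have := hφ (n + 1) (by omega)
    simp only [Nat.add_sub_cancel] at this
    linarith
  have := hmono (show a < b - 1 by omega)
  simp only [Nat.sub_add_cancel (show 1 ≤ b by omega)] at this
  linarith

theorem sum_apply_lt_of_balance {ι : Type*} [Fintype ι] [DecidableEq ι] {φ : ℕ → ℝ}
    (hφ : ∀ z : ℕ, 1 ≤ z → 2 * φ z < φ (z + 1) + φ (z - 1)) {ρ ρ' : ι → ℕ} {u v : ι}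
    (huv : ρ u + 2 ≤ ρ v)
    (hbal : ∀ x, ρ' x + (if v = x then 1 else 0) = ρ x + (if u = x then 1 else 0)) :
    ∑ x, φ (ρ' x) < ∑ x, φ (ρ x) := by
  have hne : u ≠ v := by rintro rfl; omega
  have hu : ρ' u = ρ u + 1 := by have := hbal u; simp only [if_neg hne.symm, if_true] at this; omega
  have hv : ρ' v = ρ v - 1 := by have := hbal v; simp only [if_neg hne, if_true] at this; omega
  have hrest : ∀ x ∈ univ \ {u, v}, φ (ρ' x) = φ (ρ x) := fun x hx => by
    simp only [mem_sdiff, mem_insert, mem_singleton, not_or] at hx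
    have := hbal x
    simp only [if_neg (Ne.symm hx.2.1), if_neg (Ne.symm hx.2.2)] at this
    rw [show ρ' x = ρ x by omega]
  rw [← sum_sdiff (subset_univ {u, v}), ← sum_sdiff (subset_univ {u, v}), sum_congr rfl hrest,
    sum_pair hne, sum_pair hne, hu, hv]
  linarith [apply_add_one_add_apply_sub_one_lt hφ huv]

namespace Multigraph

section

variable {V E : Type} (G : Multigraph V E)

theorem head_tail_cases (o : E → Bool) (e : E) :
    (G.head o e = G.fst e ∧ G.tail o e = G.snd e) ∨
      (G.head o e = G.snd e ∧ G.tail o e = G.fst e) := by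
  unfold head tail
  cases o e <;> simp

def IsDiwalk (o : E → Bool) : List E → V → V → Prop
  | [], u, v => u = v
  | e :: l, u, v => G.tail o e = u ∧ IsDiwalk o l (G.head o e) v

variable {G}

theorem IsDiwalk.congr {o o' : E → Bool} {l : List E} {u v : V} (h : ∀ e ∈ l, o e = o' e)
    (hl : G.IsDiwalk o l u v) : G.IsDiwalk o' l u v := by
  induction l generalizing u with
  | nil => exact hl
  | cons e l ih =>
    have hhead : G.head o e = G.head o' e := by simp only [head, h e (by simp)]
    have htail : G.tail o e = G.tail o' e := by simp only [tail, h e (by simp)]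
    exact ⟨htail ▸ hl.1, hhead ▸ ih (fun e' he' => h e' (List.mem_cons_of_mem e he')) hl.2⟩

theorem IsDiwalk.of_append {o : E → Bool} {s t : List E} {u v : V}
    (hl : G.IsDiwalk o (s ++ t) u v) : ∃ x, G.IsDiwalk o t x v := by
  induction s generalizing u with
  | nil => exact ⟨u, hl⟩
  | cons e s ih => exact ih hl.2

theorem IsDiwalk.exists_nodup {o : E → Bool} {l : List E} {u v : V} (hl : G.IsDiwalk o l u v) :
    ∃ l', l'.Nodup ∧ G.IsDiwalk o l' u v := by
  induction l generalizing u with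
  | nil => exact ⟨[], List.nodup_nil, hl⟩
  | cons e l ih =>
    obtain ⟨rfl, hl⟩ := hl
    obtain ⟨l', hnd, hl'⟩ := ih hl
    by_cases he : e ∈ l'
    · obtain ⟨s, t, rfl⟩ := List.append_of_mem he
      obtain ⟨x, -, ht⟩ := hl'.of_append
      exact ⟨e :: t, hnd.sublist (List.sublist_append_right _ _), rfl, ht⟩
    · exact ⟨e :: l', List.nodup_cons.mpr ⟨he, hnd⟩, rfl, hl'⟩

theorem hasDicycle_of_forall_exists_head [Finite V] {o : E → Bool} {S : Set V} (hS : S.Nonempty)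
    (h : ∀ u ∈ S, ∃ e, G.head o e = u ∧ G.tail o e ∈ S) : G.HasDicycle o := by
  choose F hF_head hF_tail using h
  let pred : S → S := fun u => ⟨G.tail o (F u u.2), hF_tail u u.2⟩
  have : Nonempty S := hS.to_subtype
  obtain ⟨x, hx⟩ := Function.exists_mem_periodicPts pred
  set k := Function.minimalPeriod pred x
  have hk : 0 < k := Function.minimalPeriod_pos_of_mem_periodicPts hx
  -- the dicycle runs through `pred^[k-1] x, …, pred x, x` in this order
  let y : ℕ → S := fun i => pred^[k - 1 - i] x
  refine ⟨k, hk, fun i => F (y i) (y i).2, fun i j hij => ?_, fun i => ?_⟩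
  · have hy : y i = y j := Subtype.ext <| by
      simpa only [hF_head] using congrArg (G.head o) hij
    have := Function.iterate_injOn_Iio_minimalPeriod (show k - 1 - i < k by omega)
      (show k - 1 - j < k by omega) hy
    exact Fin.ext (by omega)
  · rw [hF_head]
    show (y i : V) = (pred (y ((i.val + 1) % k)) : V)
    congr 1
    simp only [y, ← Function.iterate_succ_apply' pred]
    by_cases hi : i.val + 1 < k
    · rw [Nat.mod_eq_of_lt hi, Nat.succ_eq_add_one,
        show k - 1 - (i.val + 1) + 1 = k - 1 - i by omega]
    · rw [show i.val + 1 = k by omega, Nat.mod_self, show k - 1 - i = 0 by omega, Nat.sub_zero,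
        Nat.succ_eq_add_one, Nat.sub_add_cancel hk]
      exact Function.iterate_minimalPeriod.symm

theorem HasDicycle.exists_card_le [DecidableEq V] {o : E → Bool} (hc : G.HasDicycle o) :
    ∃ (T : Finset E) (W : Finset V), T.Nonempty ∧ W.card ≤ T.card ∧
      ∀ e ∈ T, G.fst e ∈ W ∧ G.snd e ∈ W := by
  obtain ⟨k, hk, f, hinj, hf⟩ := hc
  have htail : ∀ i, ∃ j, G.head o (f j) = G.tail o (f i) := fun i => by
    by_cases hi : i.val = 0
    · obtain rfl : i = ⟨0, hk⟩ := Fin.ext hi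
      refine ⟨⟨k - 1, by omega⟩, ?_⟩
      simpa [Nat.sub_add_cancel hk, Nat.mod_self, hi] using hf ⟨k - 1, by omega⟩
    · refine ⟨⟨i - 1, by omega⟩, ?_⟩
      simpa [Nat.sub_add_cancel (Nat.pos_of_ne_zero hi), Nat.mod_eq_of_lt i.isLt]
        using hf ⟨i - 1, by omega⟩
  refine ⟨univ.map ⟨f, hinj⟩, univ.image fun i => G.head o (f i), ⟨f ⟨0, hk⟩, by simp⟩,
    card_image_le.trans (card_map _).ge, ?_⟩
  simp only [mem_map, mem_image, mem_univ, true_and, Function.Embedding.coeFn_mk,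
    forall_exists_index, forall_apply_eq_imp_iff]
  intro i
  obtain ⟨j, hj⟩ := htail i
  rcases G.head_tail_cases o (f i) with ⟨h1, h2⟩ | ⟨h1, h2⟩
  · exact ⟨⟨i, h1⟩, ⟨j, hj.trans h2⟩⟩
  · exact ⟨⟨j, hj.trans h2⟩, ⟨i, h1⟩⟩

end

section

variable {V E : Type} [DecidableEq V] [Fintype E] {G : Multigraph V E}

theorem HasDicycle.exists_two_le_indeg [Finite V] {o₀ o : E → Bool} (hc : G.HasDicycle o₀)
    (ho : G.Acyclic o) : ∃ v, 2 ≤ G.indeg o v := by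
  by_contra! hle
  obtain ⟨T, W, hT, hcard, hTW⟩ := hc.exists_card_le
  have hmaps : ∀ e ∈ T, G.head o e ∈ W ∧ G.tail o e ∈ W := fun e he => by
    rcases G.head_tail_cases o e with ⟨h1, h2⟩ | ⟨h1, h2⟩ <;> simp [h1, h2, hTW e he]
  have hinj : Set.InjOn (G.head o) T := fun e _ e' _ h => by
    have : #{e' | G.head o e' = G.head o e} ≤ 1 := Nat.lt_succ_iff.mp (hle (G.head o e))
    exact card_le_one.mp this e (by simp) e' (by simp [h])
  have hsub : T.image (G.head o) ⊆ W := fun v hv => by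
    obtain ⟨e, he, rfl⟩ := mem_image.mp hv
    exact (hmaps e he).1
  have hsurj : T.image (G.head o) = W :=
    eq_of_subset_of_card_le hsub (by rw [card_image_of_injOn hinj]; exact hcard)
  refine ho (hasDicycle_of_forall_exists_head (S := (W : Set V)) ?_ fun v hv => ?_)
  · obtain ⟨e, he⟩ := hT
    exact ⟨_, (hmaps e he).1⟩
  · obtain ⟨e, he, rfl⟩ := mem_image.mp (hsurj ▸ hv : v ∈ T.image (G.head o))
    exact ⟨e, rfl, (hmaps e he).2⟩

def reverseAlong [DecidableEq E] (o : E → Bool) : List E → E → Bool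
  | [] => o
  | e :: l => reverseAlong (Function.update o e (!o e)) l

theorem indeg_update_not_add [DecidableEq E] (o : E → Bool) (e : E) (x : V) :
    G.indeg (Function.update o e (!o e)) x + (if G.head o e = x then 1 else 0)
      = G.indeg o x + (if G.tail o e = x then 1 else 0) := by
  simp only [indeg, card_filter]
  rw [← add_sum_erase _ _ (mem_univ e), ← add_sum_erase _ _ (mem_univ e)]
  have hrest : ∑ e' ∈ univ.erase e, (if G.head (Function.update o e (!o e)) e' = x then 1 else 0)
      = ∑ e' ∈ univ.erase e, if G.head o e' = x then 1 else 0 :=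
    sum_congr rfl fun e' he' => by rw [head, head, Function.update_of_ne (ne_of_mem_erase he')]
  have he : G.head (Function.update o e (!o e)) e = G.tail o e := by
    simp only [head, tail, Function.update_self]
    cases o e <;> simp
  rw [hrest, he]
  omega

theorem IsDiwalk.indeg_reverseAlong_add [DecidableEq E] {o : E → Bool} {l : List E} {u v : V}
    (hl : G.IsDiwalk o l u v) (hnd : l.Nodup) (x : V) :
    G.indeg (reverseAlong o l) x + (if v = x then 1 else 0)
      = G.indeg o x + (if u = x then 1 else 0) := by
  induction l generalizing o u with
  | nil => obtain rfl : u = v := hl; rfl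
  | cons e l ih =>
    obtain ⟨rfl, hl⟩ := hl
    obtain ⟨he, hnd⟩ := List.nodup_cons.mp hnd
    have hl' : G.IsDiwalk (Function.update o e (!o e)) l (G.head o e) v :=
      hl.congr fun e' he' => (Function.update_of_ne (ne_of_mem_of_not_mem he' he) _ _).symm
    have := ih hl' hnd
    have := indeg_update_not_add (G := G) o e x
    simp only [reverseAlong]
    omega

theorem IsDiwalk.exists_sum_indeg_lt [Fintype V] {φ : ℕ → ℝ}
    (hφ : ∀ z : ℕ, 1 ≤ z → 2 * φ z < φ (z + 1) + φ (z - 1)) {o : E → Bool} {l : List E}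
    {u v : V} (hl : G.IsDiwalk o l u v) (huv : G.indeg o u + 2 ≤ G.indeg o v) :
    ∃ o' : E → Bool, ∑ x, φ (G.indeg o' x) < ∑ x, φ (G.indeg o x) := by
  classical
  obtain ⟨l', hnd, hl'⟩ := hl.exists_nodup
  exact ⟨reverseAlong o l', sum_apply_lt_of_balance hφ huv (hl'.indeg_reverseAlong_add hnd)⟩

end

end Multigraph

variable {V E : Type} [Fintype V] [DecidableEq V] [Fintype E] [DecidableEq E]

/-- If `G` contains a cycle then no acyclic orientation minimizes
`∑ φ(ρ(v))` for a discrete strictly convex `φ`. -/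
theorem acyclic_not_optimal_of_cycle (G : Multigraph V E)
    (hcyc : ∃ o : E → Bool, G.HasDicycle o)
    (φ : ℕ → ℝ) (hφ : ∀ z : ℕ, 1 ≤ z → 2 * φ z < φ (z + 1) + φ (z - 1))
    (o : E → Bool) (ho : G.Acyclic o) :
    ∃ o' : E → Bool, ∑ v : V, φ (G.indeg o' v) < ∑ v : V, φ (G.indeg o v) := by
  obtain ⟨o₀, hc⟩ := hcyc
  obtain ⟨t, ht⟩ := hc.exists_two_le_indeg ho
  by_contra! hopt
  refine ho (hasDicycle_of_forall_exists_head (S := {u | ∃ l, G.IsDiwalk o l u t}) ⟨t, [], rfl⟩ ?_)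
  rintro u ⟨l, hl⟩
  have hu : 0 < G.indeg o u := by
    by_contra! h0
    obtain ⟨o', ho'⟩ := hl.exists_sum_indeg_lt hφ (by omega)
    exact (hopt o').not_gt ho'
  obtain ⟨e, he⟩ := card_pos.mp hu
  have he : G.head o e = u := (mem_filter.mp he).2
  exact ⟨e, he, e :: l, rfl, he ▸ hl⟩
end

section
/- Let φ be a discrete convex function with a breakpoint at q', and let 𝓛 be the set of multisets L of nonnegative integers with |L| = n', ∑_{ℓ∈L} ℓ = m' where m' = n'(q'−1)+r with 2k' ≤ r ≤ n'−1, and ∑_{ℓ∈L} max(ℓ−q',0) ≥ k'. Then every minimizer L' of ∑_{ℓ∈L} φ(ℓ) over 𝓛 satisfies ∑_{ℓ∈L'} max(ℓ−q',0) = k'. Moreover, the multiset L* consisting of k' copies of q'+1, (r−2k') copies of q', and (n'+k'−r) copies of q'−1 is a minimizer. -/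
open Finset

open Multigraph

variable {V E : Type} [Fintype V] [DecidableEq V] [Fintype E] [DecidableEq E]


private lemma slope_mono' (φ : ℕ → ℝ)
    (hconv : ∀ z : ℕ, 1 ≤ z → 2 * φ z ≤ φ (z + 1) + φ (z - 1)) :
    Monotone (fun z => φ (z + 1) - φ z) := by
  apply monotone_nat_of_le_succ
  intro n
  have h := hconv (n + 1) (by omega)
  simp only [Nat.add_sub_cancel] at h
  show φ (n + 1) - φ n ≤ φ (n + 1 + 1) - φ (n + 1)
  linarith

private lemma upper_part' (φ : ℕ → ℝ)
    (hconv : ∀ z : ℕ, 1 ≤ z → 2 * φ z ≤ φ (z + 1) + φ (z - 1))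
    (q' : ℕ) : ∀ d : ℕ, φ q' + d * (φ (q' + 1) - φ q') ≤ φ (q' + d) := by
  intro d
  induction d with
  | zero => simp
  | succ d ih =>
    have h := slope_mono' φ hconv (Nat.le_add_right q' d)
    simp only at h
    have e : q' + (d + 1) = (q' + d) + 1 := by omega
    rw [e]
    push_cast
    linarith

private lemma lower_part' (φ : ℕ → ℝ)
    (hconv : ∀ z : ℕ, 1 ≤ z → 2 * φ z ≤ φ (z + 1) + φ (z - 1))
    (q' : ℕ) : ∀ d : ℕ, d ≤ q' → φ q' ≤ φ (q' - d) + d * (φ q' - φ (q' - 1)) := by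
  intro d
  induction d with
  | zero => simp
  | succ d ih =>
    intro hd
    have ih' := ih (by omega)
    have h := slope_mono' φ hconv (show q' - (d + 1) ≤ q' - 1 by omega)
    simp only at h
    have e1 : q' - (d + 1) + 1 = q' - d := by omega
    have e2 : q' - 1 + 1 = q' := by omega
    rw [e1, e2] at h
    push_cast
    linarith

/-- piecewise-linear lower bound function -/
private noncomputable def lbf' (φ : ℕ → ℝ) (q' : ℕ) (z : ℕ) : ℝ :=
  φ q' + (φ q' - φ (q' - 1)) * ((z : ℝ) - (q' : ℝ))
    + ((φ (q' + 1) - φ q') - (φ q' - φ (q' - 1))) * ((z - q' : ℕ) : ℝ)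

private lemma phi_lb' (φ : ℕ → ℝ)
    (hconv : ∀ z : ℕ, 1 ≤ z → 2 * φ z ≤ φ (z + 1) + φ (z - 1))
    (q' z : ℕ) : lbf' φ q' z ≤ φ z := by
  rcases le_or_gt q' z with h | h
  · obtain ⟨d, rfl⟩ := Nat.exists_eq_add_of_le h
    have hkey : lbf' φ q' (q' + d) = φ q' + d * (φ (q' + 1) - φ q') := by
      unfold lbf'
      rw [show (q' + d - q' : ℕ) = d from by omega]
      push_cast
      ring
    rw [hkey]
    exact upper_part' φ hconv q' d
  · have h0 : (z - q' : ℕ) = 0 := by omega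
    have hzd : q' - (q' - z) = z := by omega
    have hl := lower_part' φ hconv q' (q' - z) (by omega)
    rw [hzd] at hl
    have hz : (z : ℝ) = (q' : ℝ) - ((q' - z : ℕ) : ℝ) := by
      have : ((z : ℕ) : ℝ) + ((q' - z : ℕ) : ℝ) = (q' : ℝ) := by
        rw [← Nat.cast_add]; congr 1; omega
      linarith
    have hkey : lbf' φ q' z = φ q' - ((q' - z : ℕ) : ℝ) * (φ q' - φ (q' - 1)) := by
      unfold lbf'
      rw [h0, hz]
      push_cast
      ring
    rw [hkey]
    linarith

private lemma lbf_sum' (φ : ℕ → ℝ) (q' : ℕ) (L : Multiset ℕ) :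
    (L.map (lbf' φ q')).sum
      = (Multiset.card L : ℝ) * φ q'
        + (φ q' - φ (q' - 1)) * ((L.sum : ℝ) - (Multiset.card L : ℝ) * (q' : ℝ))
        + ((φ (q' + 1) - φ q') - (φ q' - φ (q' - 1)))
            * (((L.map (fun l => l - q')).sum : ℕ) : ℝ) := by
  induction L using Multiset.induction_on with
  | empty => simp
  | cons a s ih =>
    simp only [Multiset.map_cons, Multiset.sum_cons, Multiset.card_cons]
    push_cast at ih
    rw [ih]
    unfold lbf'
    push_cast
    ring

/-- Every minimizer of `∑ φ(ℓ)` over the family `𝓛` has excess exactly `k'`,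
and the explicit multiset `L*` is a minimizer. -/
theorem multiset_minimizer (n' m' q' k' r : ℕ) (hq : 1 ≤ q')
    (hm : m' = n' * (q' - 1) + r) (hr1 : 2 * k' ≤ r) (hr2 : r < n')
    (φ : ℕ → ℝ) (hconv : ∀ z : ℕ, 1 ≤ z → 2 * φ z ≤ φ (z + 1) + φ (z - 1))
    (hbreak : 2 * φ q' < φ (q' + 1) + φ (q' - 1)) :
    (∀ L' : Multiset ℕ,
      (Multiset.card L' = n' ∧ L'.sum = m' ∧ k' ≤ (L'.map (fun l => l - q')).sum) →
      (∀ L : Multiset ℕ,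
        (Multiset.card L = n' ∧ L.sum = m' ∧ k' ≤ (L.map (fun l => l - q')).sum) →
        (L'.map φ).sum ≤ (L.map φ).sum) →
      (L'.map (fun l => l - q')).sum = k') ∧
    ((Multiset.card (Multiset.replicate k' (q' + 1) + Multiset.replicate (r - 2 * k') q' +
          Multiset.replicate (n' + k' - r) (q' - 1)) = n' ∧
      (Multiset.replicate k' (q' + 1) + Multiset.replicate (r - 2 * k') q' +
          Multiset.replicate (n' + k' - r) (q' - 1)).sum = m' ∧
      k' ≤ ((Multiset.replicate k' (q' + 1) + Multiset.replicate (r - 2 * k') q' +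
          Multiset.replicate (n' + k' - r) (q' - 1)).map (fun l => l - q')).sum) ∧
     ∀ L : Multiset ℕ,
        (Multiset.card L = n' ∧ L.sum = m' ∧ k' ≤ (L.map (fun l => l - q')).sum) →
        ((Multiset.replicate k' (q' + 1) + Multiset.replicate (r - 2 * k') q' +
            Multiset.replicate (n' + k' - r) (q' - 1)).map φ).sum ≤ (L.map φ).sum) := by

  have hC : (0 : ℝ) < (φ (q' + 1) - φ q') - (φ q' - φ (q' - 1)) := by linarith
  set Lstar := Multiset.replicate k' (q' + 1) + Multiset.replicate (r - 2 * k') q' +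
      Multiset.replicate (n' + k' - r) (q' - 1) with hLstar
  have hcard : Multiset.card Lstar = n' := by
    rw [hLstar]
    simp only [Multiset.card_add, Multiset.card_replicate]
    omega
  have hsum : Lstar.sum = m' := by
    rw [hLstar, hm]
    simp only [Multiset.sum_add, Multiset.sum_replicate, smul_eq_mul]
    obtain ⟨a, rfl⟩ : ∃ a, q' = a + 1 := ⟨q' - 1, by omega⟩
    obtain ⟨u, rfl⟩ : ∃ u, r = 2 * k' + u := ⟨r - 2 * k', by omega⟩
    obtain ⟨w, rfl⟩ : ∃ w, n' = 2 * k' + u + w + 1 := ⟨n' - (2 * k' + u) - 1, by omega⟩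
    simp only [Nat.add_sub_cancel]
    have h1 : 2 * k' + u - 2 * k' = u := by omega
    have h2 : 2 * k' + u + w + 1 + k' - (2 * k' + u) = k' + w + 1 := by omega
    rw [h1, h2]
    ring
  have hexc : (Lstar.map (fun l => l - q')).sum = k' := by
    rw [hLstar]
    simp only [Multiset.map_add, Multiset.map_replicate, Multiset.sum_add,
      Multiset.sum_replicate, smul_eq_mul]
    rw [show q' + 1 - q' = 1 from by omega, Nat.sub_self,
      show q' - 1 - q' = 0 from by omega]
    omega
  have hmcast : (m' : ℝ) = (n' : ℝ) * ((q' : ℝ) - 1) + (r : ℝ) := by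
    rw [hm, Nat.cast_add, Nat.cast_mul, Nat.cast_sub hq, Nat.cast_one]
  have hstar : (Lstar.map φ).sum
      = (n' : ℝ) * φ q' + (φ q' - φ (q' - 1)) * ((m' : ℝ) - (n' : ℝ) * (q' : ℝ))
        + ((φ (q' + 1) - φ q') - (φ q' - φ (q' - 1))) * (k' : ℝ) := by
    rw [hLstar]
    simp only [Multiset.map_add, Multiset.map_replicate, Multiset.sum_add,
      Multiset.sum_replicate, nsmul_eq_mul]
    rw [Nat.cast_sub hr1, Nat.cast_sub (show r ≤ n' + k' by omega), hmcast]
    push_cast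
    ring
  have key : ∀ L : Multiset ℕ, Multiset.card L = n' → L.sum = m' →
      (Lstar.map φ).sum + ((φ (q' + 1) - φ q') - (φ q' - φ (q' - 1)))
          * (((L.map (fun l => l - q')).sum : ℝ) - (k' : ℝ)) ≤ (L.map φ).sum := by
    intro L h1 h2
    have hle : (L.map (lbf' φ q')).sum ≤ (L.map φ).sum :=
      Multiset.sum_map_le_sum_map _ _ (fun z _ => phi_lb' φ hconv q' z)
    have heq := lbf_sum' φ q' L
    rw [h1, h2] at heq
    rw [heq] at hle
    rw [hstar]
    linarith
  constructor
  · rintro L' ⟨h1, h2, h3⟩ hmin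
    by_contra hne
    have he : k' + 1 ≤ (L'.map (fun l => l - q')).sum := by omega
    have hk := key L' h1 h2
    have hmin' := hmin Lstar ⟨hcard, hsum, hexc.ge⟩
    have hpos : (0 : ℝ) < ((φ (q' + 1) - φ q') - (φ q' - φ (q' - 1)))
        * (((L'.map (fun l => l - q')).sum : ℝ) - (k' : ℝ)) := by
      apply mul_pos hC
      have : (k' : ℝ) + 1 ≤ ((L'.map (fun l => l - q')).sum : ℝ) := by exact_mod_cast he
      linarith
    linarith
  · refine ⟨⟨hcard, hsum, hexc.ge⟩, ?_⟩
    rintro L ⟨h1, h2, h3⟩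
    have hk := key L h1 h2
    have hnn : (0 : ℝ) ≤ ((φ (q' + 1) - φ q') - (φ q' - φ (q' - 1)))
        * (((L.map (fun l => l - q')).sum : ℝ) - (k' : ℝ)) := by
      apply mul_nonneg hC.le
      have : (k' : ℝ) ≤ ((L.map (fun l => l - q')).sum : ℝ) := by exact_mod_cast h3
      linarith
    linarith
end

section
/- Let G = (V,E) be a graph and for each v ∈ V let φ_v(z) = a_v·z + b_v be a linear function. If the vertices are ordered in non-increasing order of the slopes a_v, then this ordering minimizes ∑_{v∈V} φ_v(⃖d(v)) over all vertex orderings, and the minimum value equals ∑_{uv∈E} min(a_u, a_v) + ∑_{v∈V} b_v. -/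
/-!
Counting left-degrees edge by edge, every edge is counted exactly once, at whichever endpoint
comes later in the ordering; so the objective equals `∑ₑ a(later endpoint of e) + ∑ᵥ b v`.
The later endpoint's slope is always at least `min (a u) (a v)`, with equality on every edge
once the slopes are non-increasing along the ordering.
-/

open Finset

open Multigraph

variable {V E : Type} [Fintype V] [DecidableEq V] [Fintype E] [DecidableEq E]

namespace Multigraph

variable {V E : Type} [Fintype V] (G : Multigraph V E) (σ : V ≃ Fin (Fintype.card V))

lemma apply_fst_ne_apply_snd (e : E) : σ (G.fst e) ≠ σ (G.snd e) :=
  fun h => G.loopless e (σ.injective h)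

def laterEnd (e : E) : V :=
  if σ (G.fst e) < σ (G.snd e) then G.snd e else G.fst e

lemma laterEnd_eq_fst_or_snd (e : E) :
    G.laterEnd σ e = G.fst e ∨ G.laterEnd σ e = G.snd e := by
  unfold laterEnd; split <;> simp

lemma laterEnd_eq_iff (e : E) (v : V) :
    G.laterEnd σ e = v ↔
      (G.fst e = v ∧ σ (G.snd e) < σ v) ∨ (G.snd e = v ∧ σ (G.fst e) < σ v) := by
  have hne := G.apply_fst_ne_apply_snd σ e
  unfold laterEnd
  split_ifs with h
  · constructor
    · rintro rfl; exact .inr ⟨rfl, h⟩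
    · rintro (⟨rfl, h'⟩ | ⟨rfl, -⟩)
      · exact absurd (h.trans h') (lt_irrefl _)
      · rfl
  · have h : σ (G.snd e) < σ (G.fst e) := lt_of_le_of_ne (not_lt.mp h) hne.symm
    constructor
    · rintro rfl; exact .inl ⟨rfl, h⟩
    · rintro (⟨rfl, -⟩ | ⟨rfl, h'⟩)
      · rfl
      · exact absurd (h.trans h') (lt_irrefl _)

lemma min_le_slope_laterEnd (a : V → ℝ) (e : E) :
    min (a (G.fst e)) (a (G.snd e)) ≤ a (G.laterEnd σ e) := by
  rcases G.laterEnd_eq_fst_or_snd σ e with h | h <;> rw [h]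
  exacts [min_le_left _ _, min_le_right _ _]

lemma slope_laterEnd_of_antitone {a : V → ℝ} (hσ : ∀ u v : V, σ u < σ v → a v ≤ a u) (e : E) :
    a (G.laterEnd σ e) = min (a (G.fst e)) (a (G.snd e)) := by
  unfold laterEnd
  split_ifs with h
  · exact (min_eq_right (hσ _ _ h)).symm
  · have h : σ (G.snd e) < σ (G.fst e) :=
      lt_of_le_of_ne (not_lt.mp h) (G.apply_fst_ne_apply_snd σ e).symm
    exact (min_eq_left (hσ _ _ h)).symm

variable [DecidableEq V] [Fintype E]

lemma leftDeg_eq_card_laterEnd_eq (v : V) :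
    G.leftDeg σ v = #{e | G.laterEnd σ e = v} := by
  simp only [leftDeg, laterEnd_eq_iff]

lemma sum_linear_leftDeg (a b : V → ℝ) :
    ∑ v, (a v * (G.leftDeg σ v : ℝ) + b v) = ∑ e, a (G.laterEnd σ e) + ∑ v, b v := by
  rw [sum_add_distrib, ← sum_fiberwise univ (G.laterEnd σ) (fun e => a (G.laterEnd σ e))]
  congr 1
  refine sum_congr rfl fun v _ => ?_
  rw [sum_congr rfl fun e he => congrArg a (mem_filter.1 he).2, sum_const, nsmul_eq_mul,
    leftDeg_eq_card_laterEnd_eq, mul_comm]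

end Multigraph

/-- Ordering vertices by non-increasing slope minimizes `∑ (a_v ⋅ leftdeg v + b_v)`,
and the minimum equals `∑_{uv ∈ E} min(a_u, a_v) + ∑_v b_v`. -/
theorem linear_objective_min (G : Multigraph V E) (a b : V → ℝ)
    (σ : V ≃ Fin (Fintype.card V))
    (hσ : ∀ u v : V, σ u < σ v → a v ≤ a u) :
    (∀ σ' : V ≃ Fin (Fintype.card V),
      ∑ v : V, (a v * (G.leftDeg σ v : ℝ) + b v) ≤
        ∑ v : V, (a v * (G.leftDeg σ' v : ℝ) + b v)) ∧
    ∑ v : V, (a v * (G.leftDeg σ v : ℝ) + b v) =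
      (∑ e : E, min (a (G.fst e)) (a (G.snd e))) + ∑ v : V, b v := by
  have hmin : ∑ v, (a v * (G.leftDeg σ v : ℝ) + b v) =
      ∑ e, min (a (G.fst e)) (a (G.snd e)) + ∑ v, b v := by
    rw [G.sum_linear_leftDeg σ]
    simp only [G.slope_laterEnd_of_antitone σ hσ]
  refine ⟨fun σ' => ?_, hmin⟩
  rw [hmin, G.sum_linear_leftDeg σ']
  gcongr with e
  exact G.min_le_slope_laterEnd σ' a e
end

section
/- The dec-min and inc-max acyclic orientation problems are special cases of minimizing ∑_{v∈V} φ(ρ(v)) over acyclic orientations: for any two distinct orientations D and D' of G with n = |V| vertices, D is strictly better than D' with respect to decreasing minimality of the indegree sequence if and only if ∑_{v∈V} n^{ρ_D(v)} < ∑_{v∈V} n^{ρ_{D'}(v)}. -/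
open Finset

open Multigraph

variable {V E : Type} [Fintype V] [DecidableEq V] [Fintype E] [DecidableEq E]

/-- The non-increasingly sorted indegree list of `o`. -/
def sortedDesc (G : Multigraph V E) (o : E → Bool) : List ℕ :=
  ((Finset.univ.val.map (G.indeg o)).sort (· ≤ ·)).reverse

/-
If `x :: l` is non-increasing and has length at most `n`, then `n^x + ∑ n^{lᵢ} ≤ n^{x+1}`.
Hence at the first position where two such lists of equal length differ, the larger entry
already wins the comparison of power sums; equal sums guarantee that the winning list still
has a (positive) tail there, which makes the inequality strict.
-/
namespace List

theorem sum_map_pow_lt_of_lex {n : ℕ} {a b : List ℕ} (ha : a.Pairwise (· ≥ ·))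
    (hlen : a.length = b.length) (hn : a.length ≤ n) (hsum : a.sum = b.sum)
    (hab : Lex (· < ·) a b) : (a.map (n ^ ·)).sum < (b.map (n ^ ·)).sum := by
  induction hab with
  | nil => simp at hlen
  | @cons x l bs _ ih =>
    simp only [map_cons, sum_cons, length_cons, pairwise_cons] at *
    have := ih ha.2 (by omega) (by omega) (by omega)
    omega
  | @rel x l y bs hxy =>
    simp only [map_cons, sum_cons, length_cons, pairwise_cons] at *
    have hn1 : 1 ≤ n := by omega
    have hbs : bs ≠ [] := by
      rintro rfl
      obtain rfl : l = [] := length_eq_zero_iff.mp (by simpa using hlen)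
      simp only [sum_nil, add_zero] at hsum
      omega
    have hl : (l.map (n ^ ·)).sum ≤ l.length * n ^ x := by
      simpa using sum_le_card_nsmul (l.map (n ^ ·)) (n ^ x) (by
        simp only [mem_map]
        rintro _ ⟨w, hw, rfl⟩
        exact Nat.pow_le_pow_right hn1 (ha.1 w hw))
    have hx : n ^ x + (l.map (n ^ ·)).sum ≤ n ^ y :=
      calc n ^ x + (l.map (n ^ ·)).sum ≤ (l.length + 1) * n ^ x := by linarith
        _ ≤ n * n ^ x := Nat.mul_le_mul_right _ hn
        _ = n ^ (x + 1) := by ring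
        _ ≤ n ^ y := Nat.pow_le_pow_right hn1 hxy
    obtain ⟨z, zs, rfl⟩ := exists_cons_of_ne_nil hbs
    have hz : 1 ≤ n ^ z := Nat.one_le_pow _ _ hn1
    simp only [map_cons, sum_cons]
    omega

theorem lex_iff_sum_map_pow_lt {n : ℕ} {a b : List ℕ} (ha : a.Pairwise (· ≥ ·))
    (hb : b.Pairwise (· ≥ ·)) (hlen : a.length = b.length) (hn : a.length ≤ n)
    (hsum : a.sum = b.sum) :
    Lex (· < ·) a b ↔ (a.map (n ^ ·)).sum < (b.map (n ^ ·)).sum := by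
  refine ⟨sum_map_pow_lt_of_lex ha hlen hn hsum, fun hlt => ?_⟩
  rcases trichotomous_of (Lex (· < ·)) a b with hab | rfl | hba
  · exact hab
  · exact absurd hlt (lt_irrefl _)
  · exact absurd hlt (sum_map_pow_lt_of_lex hb hlen.symm (hlen ▸ hn) hsum.symm hba).not_gt

end List

namespace Multigraph

theorem sum_indeg {V E : Type} [Fintype V] [DecidableEq V] [Fintype E]
    (G : Multigraph V E) (o : E → Bool) :
    ∑ v : V, G.indeg o v = Fintype.card E :=
  (card_eq_sum_card_fiberwise (f := G.head o) (t := univ) fun _ _ => mem_univ _).symm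

end Multigraph

theorem coe_sortedDesc {V E : Type} [Fintype V] [DecidableEq V] [Fintype E]
    (G : Multigraph V E) (o : E → Bool) :
    (sortedDesc G o : Multiset ℕ) = univ.val.map (G.indeg o) := by
  rw [sortedDesc, Multiset.coe_reverse, Multiset.sort_eq]

theorem sortedDesc_length {V E : Type} [Fintype V] [DecidableEq V] [Fintype E]
    (G : Multigraph V E) (o : E → Bool) :
    (sortedDesc G o).length = Fintype.card V := by
  simpa using congrArg Multiset.card (coe_sortedDesc G o)

theorem sortedDesc_pairwise {V E : Type} [Fintype V] [DecidableEq V] [Fintype E]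
    (G : Multigraph V E) (o : E → Bool) :
    (sortedDesc G o).Pairwise (· ≥ ·) :=
  List.pairwise_reverse.mpr (Multiset.pairwise_sort _ _)

theorem sum_map_sortedDesc {V E : Type} [Fintype V] [DecidableEq V] [Fintype E]
    (G : Multigraph V E) (o : E → Bool) (f : ℕ → ℕ) :
    ((sortedDesc G o).map f).sum = ∑ v : V, f (G.indeg o v) := by
  simpa [Multiset.map_map] using congrArg (fun m => (m.map f).sum) (coe_sortedDesc G o)

theorem sortedDesc_sum {V E : Type} [Fintype V] [DecidableEq V] [Fintype E]
    (G : Multigraph V E) (o : E → Bool) :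
    (sortedDesc G o).sum = Fintype.card E := by
  simpa [G.sum_indeg] using sum_map_sortedDesc G o id

theorem decMin_iff_powerSum_general (G : Multigraph V E) (o o' : E → Bool) :
    List.Lex (· < ·) (sortedDesc G o) (sortedDesc G o') ↔
      ∑ v : V, (Fintype.card V) ^ (G.indeg o v) <
        ∑ v : V, (Fintype.card V) ^ (G.indeg o' v) := by
  rw [← sum_map_sortedDesc G o, ← sum_map_sortedDesc G o']
  exact List.lex_iff_sum_map_pow_lt (sortedDesc_pairwise G o) (sortedDesc_pairwise G o')
    (by rw [sortedDesc_length, sortedDesc_length]) (sortedDesc_length G o).le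
    (by rw [sortedDesc_sum, sortedDesc_sum])

/-- Dec-min comparison of two orientations is equivalent to comparing
`∑ n^{ρ(v)}`. -/
theorem decMin_iff_powerSum (G : Multigraph V E) (o o' : E → Bool) (h : o ≠ o') :
    List.Lex (· < ·) (sortedDesc G o) (sortedDesc G o') ↔
      ∑ v : V, (Fintype.card V) ^ (G.indeg o v) <
        ∑ v : V, (Fintype.card V) ^ (G.indeg o' v) :=
  decMin_iff_powerSum_general G o o'
end

section
/- (Correctness of weighted smallest-last ordering) Let G = (V,E) be a graph with a nonnegative edge-weight function w. The ordering constructed from right to left by repeatedly selecting a vertex of minimum weighted degree in the remaining induced subgraph minimizes, over all vertex orderings, the maximum weighted left-degree max_{v∈V} ⃖d^w(v). -/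
open Finset

open Multigraph

variable {V E : Type} [Fintype V] [DecidableEq V] [Fintype E] [DecidableEq E]

/-- Weighted left-degree of `v` in ordering `σ`. -/
def wLeftDeg (G : Multigraph V E) (w : E → ℝ) (σ : V ≃ Fin (Fintype.card V)) (v : V) : ℝ :=
  ∑ e ∈ Finset.univ.filter (fun e =>
      (G.fst e = v ∧ σ (G.snd e) < σ v) ∨ (G.snd e = v ∧ σ (G.fst e) < σ v)), w e

/-- Weighted degree of `v` in the subgraph induced by `S`. -/
def wDegIn (G : Multigraph V E) (w : E → ℝ) (S : Finset V) (v : V) : ℝ :=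
  ∑ e ∈ Finset.univ.filter (fun e =>
      (G.fst e = v ∨ G.snd e = v) ∧ G.fst e ∈ S ∧ G.snd e ∈ S), w e

/-- The weighted smallest-last ordering minimizes the maximum weighted
left-degree. -/
theorem weighted_smallest_last [Nonempty V] (G : Multigraph V E)
    (w : E → ℝ) (hw : ∀ e, 0 ≤ w e) (σ : V ≃ Fin (Fintype.card V))
    (hgreedy : ∀ v u : V, σ u ≤ σ v →
      wDegIn G w (Multigraph.prefixSet σ v) v ≤ wDegIn G w (Multigraph.prefixSet σ v) u) :
    ∀ σ' : V ≃ Fin (Fintype.card V),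
      Finset.univ.sup' Finset.univ_nonempty (wLeftDeg G w σ) ≤
        Finset.univ.sup' Finset.univ_nonempty (wLeftDeg G w σ') := by
  intro σ'
  obtain ⟨v, -, hv⟩ := Finset.exists_max_image Finset.univ (wLeftDeg G w σ) univ_nonempty
  set S := Multigraph.prefixSet σ v with hS
  obtain ⟨u, huS, hu⟩ := Finset.exists_max_image S (fun x => σ' x)
    ⟨v, by simp [hS, Multigraph.prefixSet]⟩
  have huv : σ u ≤ σ v := by
    simpa [hS, Multigraph.prefixSet] using huS
  have h1 : wLeftDeg G w σ v = wDegIn G w S v := by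
    unfold wLeftDeg wDegIn
    congr 1
    ext e
    simp only [mem_filter, mem_univ, true_and, hS, Multigraph.prefixSet]
    constructor
    · rintro (⟨h, hlt⟩ | ⟨h, hlt⟩)
      · exact ⟨Or.inl h, by simp [h], le_of_lt hlt⟩
      · exact ⟨Or.inr h, le_of_lt hlt, by simp [h]⟩
    · rintro ⟨h | h, ha, hb⟩
      · refine Or.inl ⟨h, lt_of_le_of_ne hb fun heq => ?_⟩
        exact G.loopless e (h.trans (σ.injective heq).symm)
      · refine Or.inr ⟨h, lt_of_le_of_ne ha fun heq => ?_⟩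
        exact G.loopless e ((σ.injective heq).trans h.symm)
  have h2 : wDegIn G w S u ≤ wLeftDeg G w σ' u := by
    unfold wLeftDeg wDegIn
    apply Finset.sum_le_sum_of_subset_of_nonneg
    · intro e he
      simp only [mem_filter, mem_univ, true_and] at he ⊢
      obtain ⟨h | h, ha, hb⟩ := he
      · refine Or.inl ⟨h, lt_of_le_of_ne (hu _ hb) fun heq => ?_⟩
        exact G.loopless e (h.trans (σ'.injective heq).symm)
      · refine Or.inr ⟨h, lt_of_le_of_ne (hu _ ha) fun heq => ?_⟩
        exact G.loopless e ((σ'.injective heq).trans h.symm)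
    · exact fun e _ _ => hw e
  have hchain : Finset.univ.sup' Finset.univ_nonempty (wLeftDeg G w σ) ≤ wLeftDeg G w σ' u := by
    refine (Finset.sup'_le _ _ fun x _ => hv x (mem_univ x)).trans ?_
    calc wLeftDeg G w σ v = wDegIn G w S v := h1
      _ ≤ wDegIn G w S u := hgreedy v u huv
      _ ≤ wLeftDeg G w σ' u := h2
  exact hchain.trans (Finset.le_sup' _ (mem_univ u))
end

section
/- Let G be a graph with max weighted left-degree objective: for the ordering σ produced by the weighted smallest-last algorithm and any other ordering σ', if σ_i achieves the maximum weighted left-degree in σ and σ'_j is the last vertex of σ' among {σ_1,…,σ_i}, then ⃖d^w_σ(σ_i) ≤ ⃖d^w_{σ'}(σ'_j). In particular max_v ⃖d^w_σ(v) ≤ max_v ⃖d^w_{σ'}(v). -/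
open Finset

open Multigraph

variable {V E : Type} [Fintype V] [DecidableEq V] [Fintype E] [DecidableEq E]

/-- Key step of the weighted smallest-last argument: the maximum weighted
left-degree of the greedy ordering is bounded by the weighted left-degree of
the last vertex of any ordering among the corresponding prefix. -/
theorem weighted_smallest_last_step [Nonempty V] (G : Multigraph V E)
    (w : E → ℝ) (hw : ∀ e, 0 ≤ w e) (σ σ' : V ≃ Fin (Fintype.card V))
    (hgreedy : ∀ v u : V, σ u ≤ σ v →
      wDegIn G w (Multigraph.prefixSet σ v) v ≤ wDegIn G w (Multigraph.prefixSet σ v) u)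
    (x y : V)
    (hx : ∀ v : V, wLeftDeg G w σ v ≤ wLeftDeg G w σ x)
    (hy : y ∈ Multigraph.prefixSet σ x)
    (hylast : ∀ u ∈ Multigraph.prefixSet σ x, σ' u ≤ σ' y) :
    wLeftDeg G w σ x ≤ wLeftDeg G w σ' y ∧
    Finset.univ.sup' Finset.univ_nonempty (wLeftDeg G w σ) ≤
      Finset.univ.sup' Finset.univ_nonempty (wLeftDeg G w σ') := by
  have hy' : σ y ≤ σ x := by
    simpa [Multigraph.prefixSet] using hy
  -- Step 1: wLeftDeg σ x = wDegIn (prefixSet σ x) x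
  have h1 : wLeftDeg G w σ x = wDegIn G w (Multigraph.prefixSet σ x) x := by
    unfold wLeftDeg wDegIn
    congr 1
    apply Finset.filter_congr
    intro e _
    simp only [Multigraph.prefixSet, Finset.mem_filter, Finset.mem_univ, true_and]
    constructor
    · rintro (⟨h1, h2⟩ | ⟨h1, h2⟩)
      · exact ⟨Or.inl h1, by simp [h1], le_of_lt h2⟩
      · exact ⟨Or.inr h1, le_of_lt h2, by simp [h1]⟩
    · rintro ⟨h1 | h1, h2, h3⟩
      · refine Or.inl ⟨h1, ?_⟩
        exact lt_of_le_of_ne h3 (fun hc => G.loopless e (h1.trans (σ.injective hc).symm))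
      · refine Or.inr ⟨h1, ?_⟩
        exact lt_of_le_of_ne h2 (fun hc => G.loopless e ((σ.injective hc).trans h1.symm))
  -- Step 2: wDegIn S y ≤ wLeftDeg σ' y
  have h2 : wDegIn G w (Multigraph.prefixSet σ x) y ≤ wLeftDeg G w σ' y := by
    unfold wDegIn wLeftDeg
    apply Finset.sum_le_sum_of_subset_of_nonneg
    · intro e he
      simp only [Finset.mem_filter, Finset.mem_univ, true_and] at he ⊢
      obtain ⟨h1 | h1, h2, h3⟩ := he
      · refine Or.inl ⟨h1, ?_⟩
        exact lt_of_le_of_ne (hylast _ h3)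
          (fun hc => G.loopless e (h1.trans (σ'.injective hc).symm))
      · refine Or.inr ⟨h1, ?_⟩
        exact lt_of_le_of_ne (hylast _ h2)
          (fun hc => G.loopless e ((σ'.injective hc).trans h1.symm))
    · intro e _ _; exact hw e
  have key : wLeftDeg G w σ x ≤ wLeftDeg G w σ' y := by
    rw [h1]
    exact (hgreedy x y hy').trans h2
  refine ⟨key, ?_⟩
  apply Finset.sup'_le
  intro v _
  exact ((hx v).trans key).trans (Finset.le_sup' _ (Finset.mem_univ y))
end

section
/- For every ordering σ of the vertices of a graph and every vertex v, the product ⃖d_σ(v)·⃗d_σ(v) equals the number of length-two paths (edge pairs) u–v–w through v such that u precedes v and w succeeds v in σ. Consequently, for a uniformly random ordering σ, the expected value of ∑_{v∈V} ⃖d_σ(v)·⃗d_σ(v) is at least one third of its maximum over all orderings; i.e., a uniformly random vertex ordering is a 3-approximation in expectation for maximizing ∑_{v∈V} ⃖d(v)·⃗d(v). -/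
open Finset

open Multigraph

variable {V E : Type} [Fintype V] [DecidableEq V] [Fintype E] [DecidableEq E]

/-! The product `leftDeg σ v * rightDeg σ v` counts the pairs `(e, e')` of edges at `v` whose
other endpoints `u`, `w` satisfy `σ u < σ v < σ w`. If some ordering `τ` splits `(e, e')` in this
way, then `u`, `v`, `w` are distinct, and relabelling by transpositions shows that exactly a third
of all orderings put `v` between `u` and `w`, i.e. split `(e, e')` or `(e', e)`. As `τ` never splits
both `(e, e')` and `(e', e)`, summing over the pairs split by `τ` gives
`N · ∑ᵥ leftDeg τ v * rightDeg τ v ≤ 3 · ∑_σ ∑ᵥ leftDeg σ v * rightDeg σ v`, `N` the number of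
orderings. -/

section Orderings

variable {α β : Type*} [Fintype α] [DecidableEq α] [Fintype β] [LinearOrder β]

def IsBetween (σ : α ≃ β) (u v w : α) : Prop :=
  σ u < σ v ∧ σ v < σ w ∨ σ w < σ v ∧ σ v < σ u

instance (σ : α ≃ β) (u v w : α) : Decidable (IsBetween σ u v w) := by
  unfold IsBetween; infer_instance

theorem card_filter_trans_perm (g : Equiv.Perm α) (p : (α ≃ β) → Prop) [DecidablePred p] :
    #{σ | p (g.trans σ)} = #{σ | p σ} :=
  card_equiv (g.symm.equivCongr (.refl β)) (by simp [Equiv.equivCongr])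

theorem card_isBetween_perm (g : Equiv.Perm α) (u v w : α) :
    #{σ : α ≃ β | IsBetween σ (g u) (g v) (g w)} = #{σ : α ≃ β | IsBetween σ u v w} :=
  card_filter_trans_perm g (IsBetween · u v w)

theorem three_mul_card_isBetween {u v w : α} (huv : u ≠ v) (hvw : v ≠ w) (huw : u ≠ w) :
    3 * #{σ : α ≃ β | IsBetween σ u v w} = Fintype.card (α ≃ β) := by
  have one_middle : ∀ σ : α ≃ β, (if IsBetween σ u v w then 1 else 0) +
      (if IsBetween σ v u w then 1 else 0) + (if IsBetween σ u w v then 1 else 0) = 1 := by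
    intro σ
    have := σ.injective.ne huv
    have := σ.injective.ne hvw
    have := σ.injective.ne huw
    unfold IsBetween
    grind
  have hvuw : #{σ : α ≃ β | IsBetween σ v u w} = #{σ : α ≃ β | IsBetween σ u v w} := by
    simpa [Equiv.swap_apply_of_ne_of_ne huw.symm hvw.symm] using
      card_isBetween_perm (Equiv.swap u v) u v w
  have huwv : #{σ : α ≃ β | IsBetween σ u w v} = #{σ : α ≃ β | IsBetween σ u v w} := by
    simpa [Equiv.swap_apply_of_ne_of_ne huv huw] using
      card_isBetween_perm (Equiv.swap v w) u v w
  calc 3 * #{σ : α ≃ β | IsBetween σ u v w}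
      = #{σ : α ≃ β | IsBetween σ u v w} + #{σ : α ≃ β | IsBetween σ v u w} +
          #{σ : α ≃ β | IsBetween σ u w v} := by rw [hvuw, huwv]; ring
    _ = Fintype.card (α ≃ β) := by
      simp only [card_filter, ← sum_add_distrib, one_middle, sum_const, card_univ, smul_eq_mul,
        mul_one]

end Orderings

namespace Multigraph

section Split

omit [Fintype V] [DecidableEq E]

variable {β : Type*} [LinearOrder β]

def leftEdges (G : Multigraph V E) (σ : V → β) (v : V) : Finset E :=
  {e | (G.fst e = v ∧ σ (G.snd e) < σ v) ∨ (G.snd e = v ∧ σ (G.fst e) < σ v)}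

def rightEdges (G : Multigraph V E) (σ : V → β) (v : V) : Finset E :=
  {e | (G.fst e = v ∧ σ v < σ (G.snd e)) ∨ (G.snd e = v ∧ σ v < σ (G.fst e))}

def splitPairs (G : Multigraph V E) (σ : V → β) (v : V) : Finset (E × E) :=
  G.leftEdges σ v ×ˢ G.rightEdges σ v

theorem exists_other_endpoint (G : Multigraph V E) {e : E} {v : V}
    (he : G.fst e = v ∨ G.snd e = v) :
    ∃ u ≠ v, ∀ σ : V → β,
      (e ∈ G.leftEdges σ v ↔ σ u < σ v) ∧ (e ∈ G.rightEdges σ v ↔ σ v < σ u) := by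
  have hloop := G.loopless e
  rcases he with rfl | rfl
  · exact ⟨G.snd e, hloop.symm, fun σ => by simp [leftEdges, rightEdges, hloop.symm]⟩
  · exact ⟨G.fst e, hloop, fun σ => by simp [leftEdges, rightEdges, hloop]⟩

theorem fst_eq_or_snd_eq_of_mem_leftEdges (G : Multigraph V E) {σ : V → β} {v : V} {e : E}
    (he : e ∈ G.leftEdges σ v) : G.fst e = v ∨ G.snd e = v := by
  simp only [leftEdges, mem_filter, mem_univ, true_and] at he
  tauto

theorem fst_eq_or_snd_eq_of_mem_rightEdges (G : Multigraph V E) {σ : V → β} {v : V} {e : E}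
    (he : e ∈ G.rightEdges σ v) : G.fst e = v ∨ G.snd e = v := by
  simp only [rightEdges, mem_filter, mem_univ, true_and] at he
  tauto

theorem disjoint_leftEdges_rightEdges (G : Multigraph V E) (σ : V → β) (v : V) :
    Disjoint (G.leftEdges σ v) (G.rightEdges σ v) := by
  refine disjoint_left.mpr fun e hl hr => ?_
  obtain ⟨u, -, hu⟩ := G.exists_other_endpoint (β := β) (G.fst_eq_or_snd_eq_of_mem_leftEdges hl)
  exact lt_asymm ((hu σ).1.mp hl) ((hu σ).2.mp hr)

theorem exists_outer_endpoints_of_mem_splitPairs (G : Multigraph V E) {τ : V → β} {v : V} {p : E × E}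
    (hp : p ∈ G.splitPairs τ v) :
    ∃ u w, u ≠ v ∧ v ≠ w ∧ u ≠ w ∧ ∀ σ : V → β,
      (p ∈ G.splitPairs σ v ↔ σ u < σ v ∧ σ v < σ w) ∧
      (p.swap ∈ G.splitPairs σ v ↔ σ w < σ v ∧ σ v < σ u) := by
  rw [splitPairs, mem_product] at hp
  obtain ⟨u, huv, hu⟩ := G.exists_other_endpoint (β := β) (G.fst_eq_or_snd_eq_of_mem_leftEdges hp.1)
  obtain ⟨w, hwv, hw⟩ := G.exists_other_endpoint (β := β) (G.fst_eq_or_snd_eq_of_mem_rightEdges hp.2)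
  have huw : u ≠ w := ne_of_apply_ne τ ((hu τ).1.mp hp.1 |>.trans ((hw τ).2.mp hp.2)).ne
  refine ⟨u, w, huv, hwv.symm, huw, fun σ => ?_⟩
  simp only [splitPairs, mem_product, Prod.fst_swap, Prod.snd_swap, (hu σ).1, (hu σ).2, (hw σ).1,
    (hw σ).2, and_self]

end Split

omit [DecidableEq E] in
theorem leftDeg_mul_rightDeg (G : Multigraph V E) (σ : V ≃ Fin (Fintype.card V)) (v : V) :
    G.leftDeg σ v * G.rightDeg σ v = #(G.splitPairs σ v) :=
  (card_product _ _).symm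

section Counting

variable {β : Type*} [Fintype β] [LinearOrder β]

theorem three_mul_card_mem_splitPairs_add_swap (G : Multigraph V E) {τ : V ≃ β} {v : V}
    {p : E × E} (hp : p ∈ G.splitPairs τ v) :
    3 * (#{σ : V ≃ β | p ∈ G.splitPairs σ v} + #{σ : V ≃ β | p.swap ∈ G.splitPairs σ v}) =
      Fintype.card (V ≃ β) := by
  obtain ⟨u, w, huv, hvw, huw, hσ⟩ := G.exists_outer_endpoints_of_mem_splitPairs hp
  have hdisj : Disjoint (α := Finset (V ≃ β)) {σ | p ∈ G.splitPairs σ v}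
      {σ | p.swap ∈ G.splitPairs σ v} :=
    disjoint_filter.mpr fun σ _ h h' => lt_asymm ((hσ σ).1.mp h).1 ((hσ σ).2.mp h').2
  rw [← card_union_of_disjoint hdisj, ← filter_or, ← three_mul_card_isBetween huv hvw huw]
  simp only [hσ, IsBetween]

theorem card_mul_card_splitPairs_le (G : Multigraph V E) (τ : V ≃ β) (v : V) :
    Fintype.card (V ≃ β) * #(G.splitPairs τ v) ≤ 3 * ∑ σ : V ≃ β, #(G.splitPairs σ v) := by
  set T := G.splitPairs τ v
  set Tswap := T.map (Equiv.prodComm E E).toEmbedding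
  let f : E × E → ℕ := fun p => #{σ : V ≃ β | p ∈ G.splitPairs σ v}
  have hdisj : Disjoint T Tswap := by
    refine disjoint_left.mpr fun p hp hp' => ?_
    obtain ⟨q, hq, rfl⟩ := mem_map.mp hp'
    exact disjoint_left.mp (G.disjoint_leftEdges_rightEdges τ v) (mem_product.mp hq).1
      (mem_product.mp hp).2
  calc Fintype.card (V ≃ β) * #T
      = 3 * (∑ p ∈ T, f p + ∑ p ∈ Tswap, f p) := by
        rw [sum_map, ← sum_add_distrib, mul_sum, card_eq_sum_ones, mul_sum]
        exact sum_congr rfl fun p hp => by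
          rw [mul_one, ← G.three_mul_card_mem_splitPairs_add_swap hp]; rfl
    _ ≤ 3 * ∑ p, f p := by
        rw [← sum_union hdisj]
        exact Nat.mul_le_mul_left _ (sum_le_sum_of_subset (subset_univ _))
    _ = 3 * ∑ σ : V ≃ β, #(G.splitPairs σ v) := by
        simp only [f, card_filter]
        rw [sum_comm]
        simp

end Counting

theorem card_mul_sum_leftDeg_mul_rightDeg_le (G : Multigraph V E) (τ : V ≃ Fin (Fintype.card V)) :
    Fintype.card (V ≃ Fin (Fintype.card V)) * ∑ v, G.leftDeg τ v * G.rightDeg τ v ≤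
      3 * ∑ σ : V ≃ Fin (Fintype.card V), ∑ v, G.leftDeg σ v * G.rightDeg σ v := by
  rw [mul_sum, sum_comm, mul_sum]
  refine sum_le_sum fun v _ => ?_
  simpa only [leftDeg_mul_rightDeg] using G.card_mul_card_splitPairs_le τ v

end Multigraph

/-- `leftdeg(v)·rightdeg(v)` counts the length-two paths through `v` split by
`v` in the ordering, and a uniformly random ordering is a `3`-approximation in
expectation for maximizing `∑ leftdeg(v)·rightdeg(v)`. -/
theorem random_order_three_approx (G : Multigraph V E) :
    (∀ (σ : V ≃ Fin (Fintype.card V)) (v : V),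
      G.leftDeg σ v * G.rightDeg σ v =
        (Finset.univ.filter (fun p : E × E =>
          ((G.fst p.1 = v ∧ σ (G.snd p.1) < σ v) ∨
            (G.snd p.1 = v ∧ σ (G.fst p.1) < σ v)) ∧
          ((G.fst p.2 = v ∧ σ v < σ (G.snd p.2)) ∨
            (G.snd p.2 = v ∧ σ v < σ (G.fst p.2))))).card) ∧
    ∀ τ : V ≃ Fin (Fintype.card V),
      (∑ v : V, (G.leftDeg τ v * G.rightDeg τ v : ℝ)) ≤
        3 * ((∑ σ : V ≃ Fin (Fintype.card V),
                ∑ v : V, (G.leftDeg σ v * G.rightDeg σ v : ℝ)) /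
              (Fintype.card (V ≃ Fin (Fintype.card V)) : ℝ)) := by
  refine ⟨fun σ v => ?_, fun τ => ?_⟩
  · rw [G.leftDeg_mul_rightDeg]
    congr 1
    ext p
    simp [splitPairs, leftEdges, rightEdges]
  · have hN : (0 : ℝ) < Fintype.card (V ≃ Fin (Fintype.card V)) :=
      Nat.cast_pos.mpr (Fintype.card_pos_iff.mpr ⟨Fintype.equivFin V⟩)
    rw [← mul_div_assoc, le_div_iff₀ hN, mul_comm]
    exact_mod_cast G.card_mul_sum_leftDeg_mul_rightDeg_le τ
end
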